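/- arXiv:1501.05037 — 3 statements merged into one kernel-verified Lean document; each statement's English description precedes it below -/
import Mathlib

section
/- Let d ≥ 1 and let G be a simple graph on a countable vertex set V whose vertices can be enumerated v₀, v₁, v₂, … so that every vertex vₙ has at most d neighbors among {v₀, …, v_{n−1}} (i.e. G is d-degenerate with a witnessing ordering). Let g be a function assigning a real number (a squared length) to every edge of G. Then there exists a map f : V → ℝ^d_d such that for every edge {a,b} of G one has ⟨f(a) − f(b), f(a) − f(b)⟩ = g(a,b). -/
/-!
In the null coordinates `x = u⁺ + u⁻`, `y = u⁺ - u⁻` of `ℝ^d_d` the squared length is `⟪x, y⟫`.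
Put the vertex `vₙ` at `y = (n, n², …, nᵈ)` on the moment curve and choose its `x` inductively:
the conditions along the at most `d` edges to earlier neighbours `vₘ` are the linear equations
`⟪xₙ - xₘ, yₙ - yₘ⟫ = g(vₙ, vₘ)` in `xₙ`. They are solvable because `t ↦ ⟪x, (t, …, tᵈ)⟫` runs
through all polynomials of degree at most `d` without constant term, and Lagrange interpolation
at the node `n` and the at most `d` nodes `m` prescribes the differences of values freely.
-/

/-- The Minkowski space `ℝ^d_d`. -/
abbrev Mink (d : ℕ) :=
  EuclideanSpace ℝ (Fin d) × EuclideanSpace ℝ (Fin d)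

/-- The indefinite bilinear form of signature `(d, d)` on `Mink d`. -/
noncomputable def mform (d : ℕ) (u v : Mink d) : ℝ :=
  inner ℝ u.1 v.1 - inner ℝ u.2 v.2

theorem Nat.exists_seq_forall_fin {α : Type*} (P : (n : ℕ) → (Fin n → α) → α → Prop)
    (h : ∀ n prev, ∃ a, P n prev a) : ∃ x : ℕ → α, ∀ n, P n (fun m => x m) (x n) := by
  let x : ℕ → α := Nat.strongRec fun n prev => Classical.choose (h n fun m => prev m m.isLt)
  refine ⟨x, fun n => ?_⟩
  have hx : x n = Classical.choose (h n fun m => x m) := Nat.strongRec_eq _ n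
  exact hx ▸ Classical.choose_spec (h n fun m => x m)

theorem Fin.card_filter_univ_eq_ncard (n : ℕ) (p : ℕ → Prop) [DecidablePred p] :
    (Finset.univ.filter fun m : Fin n => p m).card = {m | m < n ∧ p m}.ncard := by
  rw [← Finset.card_map Fin.valEmbedding, ← Set.ncard_coe_finset]
  congr 1
  ext m
  simp only [Finset.coe_map, Fin.valEmbedding_apply, Finset.coe_filter, Finset.mem_univ,
    true_and, Set.mem_image, Set.mem_ofPred_eq]
  exact ⟨fun ⟨k, hk, hkm⟩ => hkm ▸ ⟨k.isLt, hk⟩, fun ⟨hm, hp⟩ => ⟨⟨m, hm⟩, hp, rfl⟩⟩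

open Polynomial

noncomputable section

def momentCurve (d : ℕ) (t : ℝ) : EuclideanSpace ℝ (Fin d) :=
  WithLp.toLp 2 fun j => t ^ ((j : ℕ) + 1)

def Polynomial.momentCoeffs (d : ℕ) (q : ℝ[X]) : EuclideanSpace ℝ (Fin d) :=
  WithLp.toLp 2 fun j => q.coeff ((j : ℕ) + 1)

theorem inner_momentCoeffs_momentCurve {d : ℕ} {q : ℝ[X]} (hq : q.natDegree ≤ d) (t : ℝ) :
    inner ℝ (q.momentCoeffs d) (momentCurve d t) = q.eval t - q.coeff 0 := by
  rw [eval_eq_sum_range' (Nat.lt_succ_of_le hq), Finset.sum_range_succ', PiLp.inner_apply,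
    ← Fin.sum_univ_eq_sum_range]
  simp [momentCoeffs, momentCurve, mul_comm]

theorem exists_inner_momentCurve_add_eq {ι : Type*} (d : ℕ) {S : Finset ι}
    (hS : S.card ≤ d + 1) {t : ι → ℝ} (ht : Set.InjOn t S) (r : ι → ℝ) :
    ∃ (x : EuclideanSpace ℝ (Fin d)) (c : ℝ),
      ∀ i ∈ S, inner ℝ x (momentCurve d (t i)) + c = r i := by
  classical
  set q := Lagrange.interpolate S t r
  have hq : q.natDegree ≤ d := by
    have : q.degree < ↑(d + 1) :=
      (Lagrange.degree_interpolate_lt r ht).trans_le (by exact_mod_cast hS)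
    exact natDegree_le_of_degree_le (Order.le_of_lt_succ (by exact_mod_cast this))
  refine ⟨q.momentCoeffs d, q.coeff 0, fun i hi => ?_⟩
  rw [inner_momentCoeffs_momentCurve hq, sub_add_cancel, Lagrange.eval_interpolate_at_node r ht hi]

theorem exists_inner_momentCurve_sub_eq {ι : Type*} (d : ℕ) {S : Finset ι} (hS : S.card ≤ d)
    {t : ι → ℝ} (ht : Set.InjOn t S) {s : ℝ} (hs : ∀ i ∈ S, t i ≠ s) (c : ι → ℝ) :
    ∃ x : EuclideanSpace ℝ (Fin d), ∀ i ∈ S,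
      inner ℝ x (momentCurve d s - momentCurve d (t i)) = c i := by
  have hinj : Set.InjOn (fun o => o.elim s t) (S.insertNone : Set (Option ι)) := by
    rintro (_ | i) hi (_ | j) hj hij
    · rfl
    · exact absurd hij.symm (hs j (by simpa using hj))
    · exact absurd hij (hs i (by simpa using hi))
    · exact congrArg some (ht (by simpa using hi) (by simpa using hj) hij)
  obtain ⟨x, k, hx⟩ := exists_inner_momentCurve_add_eq d (S := S.insertNone)
    (by simpa using hS) hinj (fun o => o.elim 0 fun i => -c i)
  refine ⟨x, fun i hi => ?_⟩
  have hnone := hx none Finset.none_mem_insertNone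
  have hsome := hx (some i) (Finset.some_mem_insertNone.mpr hi)
  simp only [Option.elim] at hnone hsome
  rw [inner_sub_right]
  linarith

def Mink.ofNullCoords {d : ℕ} (x y : EuclideanSpace ℝ (Fin d)) : Mink d :=
  ((2 : ℝ)⁻¹ • (x + y), (2 : ℝ)⁻¹ • (x - y))

theorem Mink.ofNullCoords_sub {d : ℕ} (x y x' y' : EuclideanSpace ℝ (Fin d)) :
    ofNullCoords x y - ofNullCoords x' y' = ofNullCoords (x - x') (y - y') := by
  simp only [ofNullCoords, Prod.mk_sub_mk, ← smul_sub]
  congr 2 <;> abel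

theorem mform_ofNullCoords_self {d : ℕ} (x y : EuclideanSpace ℝ (Fin d)) :
    mform d (Mink.ofNullCoords x y) (Mink.ofNullCoords x y) = inner ℝ x y := by
  simp only [mform, Mink.ofNullCoords, real_inner_smul_left, real_inner_smul_right,
    inner_add_add_self, inner_sub_sub_self, real_inner_comm y x]
  ring

end

theorem isometric_map_of_degenerate_general (d : ℕ) {V : Type*}
    (G : SimpleGraph V) (e : ℕ ≃ V)
    (hdeg : ∀ n : ℕ, {m : ℕ | m < n ∧ G.Adj (e n) (e m)}.ncard ≤ d)
    (g : V → V → ℝ) (hsymm : ∀ a b : V, g a b = g b a) :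
    ∃ f : V → Mink d, ∀ a b : V, G.Adj a b →
      mform d (f a - f b) (f a - f b) = g a b := by
  classical
  have step : ∀ n (prev : Fin n → EuclideanSpace ℝ (Fin d)), ∃ x, ∀ m : Fin n,
      G.Adj (e n) (e m) →
        inner ℝ (x - prev m) (momentCurve d n - momentCurve d m) = g (e n) (e m) := by
    intro n prev
    obtain ⟨x, hx⟩ := exists_inner_momentCurve_sub_eq d
      ((Fin.card_filter_univ_eq_ncard n _).trans_le (hdeg n))
      (t := fun m : Fin n => ((m : ℕ) : ℝ)) (fun i _ j _ h => Fin.ext (Nat.cast_injective h))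
      (s := n) (fun m _ => by simp [m.isLt.ne])
      (fun m => g (e n) (e m) + inner ℝ (prev m) (momentCurve d n - momentCurve d m))
    refine ⟨x, fun m hm => ?_⟩
    rw [inner_sub_left, hx m (by simpa using hm), add_sub_cancel_right]
  obtain ⟨x, hx⟩ := Nat.exists_seq_forall_fin _ step
  refine ⟨fun v => Mink.ofNullCoords (x (e.symm v)) (momentCurve d (e.symm v)), fun a b hab => ?_⟩
  obtain ⟨n, rfl⟩ := e.surjective a
  obtain ⟨m, rfl⟩ := e.surjective b
  simp only [Equiv.symm_apply_apply, Mink.ofNullCoords_sub, mform_ofNullCoords_self]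
  wlog hmn : m < n generalizing n m
  · rw [hsymm, ← inner_neg_neg, neg_sub, neg_sub]
    exact this m n hab.symm (lt_of_le_of_ne (not_lt.mp hmn) fun h => G.ne_of_adj hab (by rw [h]))
  exact hx n ⟨m, hmn⟩ hab

/-- Any `d`-degenerate (with witnessing ordering) simple graph on a
countable vertex set, with arbitrary real squared edge lengths `g`, admits a simplicial
isometric map into `ℝ^d_d`. -/
theorem isometric_map_of_degenerate (d : ℕ) (hd : 1 ≤ d) {V : Type*}
    (G : SimpleGraph V) (e : ℕ ≃ V)
    (hdeg : ∀ n : ℕ, {m : ℕ | m < n ∧ G.Adj (e n) (e m)}.ncard ≤ d)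
    (g : V → V → ℝ) (hsymm : ∀ a b : V, g a b = g b a) :
    ∃ f : V → Mink d, ∀ a b : V, G.Adj a b →
      mform d (f a - f b) (f a - f b) = g a b :=
  isometric_map_of_degenerate_general d G e hdeg g hsymm
end

section
/- Let d ≥ 1, let S ⊆ ℝ^d_d be a countable set of points in d-general position, let m ≤ d, let u₁, …, u_m be (distinct) points of S, and let c₁, …, c_m be arbitrary real numbers. Then there exists a point u₀ ∈ ℝ^d_d such that ⟨u₀ − uᵢ, u₀ − uᵢ⟩ = cᵢ for every 1 ≤ i ≤ m, and such that the set S ∪ {u₀} is in d-general position. -/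
/-- A set `S` of points of a real vector space is in `d`-general position if every
subset of `S` with at most `d + 1` elements is affinely independent. -/
def InGenPos (d : ℕ) {W : Type*} [AddCommGroup W] [Module ℝ W] (S : Set W) : Prop :=
  ∀ t : Finset W, ↑t ⊆ S → t.card ≤ d + 1 → AffineIndependent ℝ (fun x : t => (x : W))

/-! Subtracting the equation for `u₁` from the others leaves `m - 1` linear equations, which are
independent because the `uᵢ` are affinely independent and the form is nondegenerate, together
with the single quadric equation `⟨x - u₁, x - u₁⟩ = c₁`. The linear equations cut out an affine
subspace whose direction `W` has dimension at least `d + 1`, so the form is indefinite on `W`.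
Writing `W = H ⊕ ℝ n` with `⟨n, n⟩ > 0` and `H ⊥ n`, the quadric contains the graph of
`y ↦ y + σ(y) n` over a nonempty open subset of `H` for a continuous `σ`. An affine span of at
most `d` points has dimension at most `d - 1 < dim W - 1`, so it cannot contain a piece of the
graph; by Baire's theorem some point of the graph avoids the countably many such spans, and
adding a point outside all of them preserves `d`-general position. -/

open Module

section BilinForm

variable {V : Type*} [AddCommGroup V] [Module ℝ V] {B : LinearMap.BilinForm ℝ V}

theorem apply_add_smul_self (hB : B.IsSymm) (x y : V) (s : ℝ) :
    B (x + s • y) (x + s • y) = B x x + 2 * s * B x y + s ^ 2 * B y y := by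
  simp only [map_add, map_smul, LinearMap.add_apply, LinearMap.smul_apply, smul_eq_mul,
    hB.eq y x]
  ring

theorem exists_apply_eq_of_linearIndependent (hB : LinearMap.SeparatingLeft B) {ι : Type*}
    [Fintype ι] [DecidableEq ι] {v : ι → V} (hv : LinearIndependent ℝ v) (e : ι → ℝ) :
    ∃ w, ∀ i, B (v i) w = e i := by
  let T : V →ₗ[ℝ] ι → ℝ := LinearMap.pi fun i => B (v i)
  suffices Function.Surjective T from (this e).imp fun w hw i => congr_fun hw i
  -- A functional `f` with `f ∘ T = 0` makes `∑ f (eᵢ) • vᵢ` left-orthogonal to everything.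
  rw [← LinearMap.dualMap_injective_iff, injective_iff_map_eq_zero]
  intro f hf
  set a : ι → ℝ := fun i => f fun j => if i = j then 1 else 0
  have hcomb : ∑ i, a i • v i = 0 := by
    refine hB _ fun w => ?_
    have hfw : f (T w) = 0 := LinearMap.congr_fun hf w
    rw [LinearMap.pi_apply_eq_sum_univ] at hfw
    simpa [map_sum, T, a, mul_comm] using hfw
  have ha := Fintype.linearIndependent_iff.mp hv a hcomb
  ext i
  have hsingle : (Pi.single i 1 : ι → ℝ) = fun j => if i = j then 1 else 0 := by
    ext j
    simp [Pi.single_apply, eq_comm]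
  simpa [hsingle] using ha i

theorem exists_submodule_forall_apply_sub_self_eq [FiniteDimensional ℝ V] (hB : B.IsSymm)
    (hBsep : LinearMap.SeparatingLeft B) {k : ℕ} {u : Fin (k + 1) → V}
    (hu : AffineIndependent ℝ u) (c : Fin (k + 1) → ℝ) :
    ∃ (p : V) (W : Submodule ℝ V), finrank ℝ V ≤ finrank ℝ W + k ∧
      ∀ x, x - p ∈ W → B (x - u 0) (x - u 0) = c 0 → ∀ i, B (x - u i) (x - u i) = c i := by
  set v : Fin k → V := fun j => u j.succ - u 0
  have hv : LinearIndependent ℝ v :=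
    ((affineIndependent_iff_linearIndependent_vsub ℝ u 0).mp hu).comp
      (fun j => ⟨j.succ, j.succ_ne_zero⟩)
      fun a b h => Fin.succ_injective _ (congrArg Subtype.val h)
  obtain ⟨w₀, hw₀⟩ := exists_apply_eq_of_linearIndependent hBsep hv
    fun j => (c 0 + B (v j) (v j) - c j.succ) / 2
  let T : V →ₗ[ℝ] Fin k → ℝ := LinearMap.pi fun j => B (v j)
  refine ⟨u 0 + w₀, LinearMap.ker T, ?_, fun x hx hx0 i => ?_⟩
  · have hrange := (LinearMap.range T).finrank_le
    rw [finrank_fin_fun] at hrange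
    have := T.finrank_range_add_finrank_ker
    omega
  have hlin : ∀ j, B (x - u 0) (v j) = (c 0 + B (v j) (v j) - c j.succ) / 2 := by
    intro j
    have hTj : B (v j) (x - (u 0 + w₀)) = 0 := congr_fun (LinearMap.mem_ker.mp hx) j
    rw [hB.eq, show x - u 0 = w₀ + (x - (u 0 + w₀)) by abel, map_add, hw₀, hTj, add_zero]
  cases i using Fin.cases with
  | zero => exact hx0
  | succ j =>
    rw [show x - u j.succ = (x - u 0) + (-1 : ℝ) • v j by simp [v],
      apply_add_smul_self hB, hx0, hlin]
    ring

theorem sub_smul_mem_inf_ker {W : Submodule ℝ V} {n z : V} (hnW : n ∈ W) (hn : B n n ≠ 0)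
    (hzW : z ∈ W) : z - (B n z / B n n) • n ∈ W ⊓ LinearMap.ker (B n) :=
  ⟨W.sub_mem hzW (W.smul_mem _ hnW), by simp [div_mul_cancel₀ _ hn]⟩

theorem le_inf_ker_sup_span {W : Submodule ℝ V} {n : V} (hnW : n ∈ W) (hn : B n n ≠ 0) :
    W ≤ W ⊓ LinearMap.ker (B n) ⊔ ℝ ∙ n := fun z hzW => by
  rw [← sub_add_cancel z ((B n z / B n n) • n)]
  exact Submodule.add_mem_sup (sub_smul_mem_inf_ker hnW hn hzW)
    (Submodule.smul_mem _ _ (Submodule.mem_span_singleton_self n))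

theorem exists_mem_inf_ker_apply_self_neg (hB : B.IsSymm) {W : Submodule ℝ V} {n z : V}
    (hnW : n ∈ W) (hn : 0 < B n n) (hzW : z ∈ W) (hz : B z z < 0) :
    ∃ y ∈ W ⊓ LinearMap.ker (B n), B y y < 0 := by
  set γ := B n z / B n n
  have hy := sub_smul_mem_inf_ker hnW hn.ne' hzW
  refine ⟨z - γ • n, hy, ?_⟩
  have hexp := apply_add_smul_self hB (z - γ • n) n γ
  rw [sub_add_cancel, hB.eq (z - γ • n) n, show B n (z - γ • n) = 0 from hy.2] at hexp
  nlinarith [sq_nonneg γ]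

theorem exists_apply_add_smul_self_lt (hB : B.IsSymm) {z : V} (hz : B z z < 0) (a : V) (c : ℝ) :
    ∃ t : ℝ, B (a + t • z) (a + t • z) < c := by
  by_contra! h
  have hdisc := discrim_le_zero (a := B z z) (b := 2 * B a z) (c := B a a - c) fun t => by
    have := h t
    rw [apply_add_smul_self hB] at this
    linarith
  have h0 := h 0
  have h1 := h 1
  rw [zero_smul, add_zero] at h0
  rw [apply_add_smul_self hB, one_pow] at h1
  unfold discrim at hdisc
  nlinarith [mul_le_mul_of_nonpos_left h1 hz.le, mul_le_mul_of_nonpos_left h0 hz.le,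
    mul_pos_of_neg_of_neg hz hz, sq_nonneg (B z z + 2 * B a z)]

end BilinForm

section Avoidance

variable {E V : Type*} [NormedAddCommGroup E] [NormedSpace ℝ E]
  [NormedAddCommGroup V] [NormedSpace ℝ V] [FiniteDimensional ℝ V]

theorem interior_preimage_affineSubspace_eq_empty (φ : E →ₗ[ℝ] V) (p n : V) (σ : E → ℝ)
    {A : AffineSubspace ℝ V}
    (hA : finrank ℝ A.direction + 1 < finrank ℝ ↥(LinearMap.range φ ⊔ ℝ ∙ n)) :
    interior ((fun x => p + φ x + σ x • n) ⁻¹' A) = ∅ := by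
  set G := fun x => p + φ x + σ x • n
  refine Set.eq_empty_of_forall_notMem fun x₀ hx₀ => hA.not_ge ?_
  set P := A.direction ⊔ ℝ ∙ n
  have hP : P.comap φ = ⊤ := by
    refine Submodule.eq_top_of_nonempty_interior' _ ⟨0, ?_⟩
    refine interior_maximal (fun y hy => ?_)
      (isOpen_interior.preimage (continuous_add_const x₀)) (by simpa using hx₀)
    have hdir := AffineSubspace.vsub_mem_direction (interior_subset (s := G ⁻¹' A) hy)
      (interior_subset (s := G ⁻¹' A) hx₀)
    have hφ : φ y = (G (y + x₀) -ᵥ G x₀) - (σ (y + x₀) - σ x₀) • n := by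
      simp only [G, map_add, sub_smul, vsub_eq_sub]
      abel
    rw [SetLike.mem_coe, Submodule.mem_comap, hφ]
    exact P.sub_mem (Submodule.mem_sup_left hdir)
      (Submodule.mem_sup_right (Submodule.smul_mem _ _ (Submodule.mem_span_singleton_self n)))
  calc finrank ℝ ↥(LinearMap.range φ ⊔ ℝ ∙ n)
      ≤ finrank ℝ P := Submodule.finrank_mono (sup_le (LinearMap.range_le_iff_comap.mpr hP)
        le_sup_right)
    _ ≤ finrank ℝ A.direction + finrank ℝ (ℝ ∙ n) :=
      Submodule.finrank_add_le_finrank_add_finrank _ _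
    _ ≤ finrank ℝ A.direction + 1 := by
      grw [finrank_span_le_card]
      simp

variable [FiniteDimensional ℝ E]

theorem dense_setOf_forall_notMem_affineSubspace (φ : E →ₗ[ℝ] V) (p n : V) {σ : E → ℝ}
    (hσ : Continuous σ) {𝒜 : Set (AffineSubspace ℝ V)} (h𝒜 : 𝒜.Countable)
    (hdim : ∀ A ∈ 𝒜, finrank ℝ A.direction + 1 < finrank ℝ ↥(LinearMap.range φ ⊔ ℝ ∙ n)) :
    Dense {x | ∀ A ∈ 𝒜, p + φ x + σ x • n ∉ A} := by
  have hG : Continuous fun x => p + φ x + σ x • n :=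
    (continuous_const.add φ.continuous_of_finiteDimensional).add (hσ.smul continuous_const)
  convert dense_biInter_of_isOpen
    (fun A _ => (AffineSubspace.closed_of_finiteDimensional A |>.preimage hG).isOpen_compl) h𝒜
    fun A hA => interior_eq_empty_iff_dense_compl.mp
      (interior_preimage_affineSubspace_eq_empty φ p n σ (hdim A hA))
  ext
  simp

end Avoidance

section Quadric

variable {V : Type*} [NormedAddCommGroup V] [NormedSpace ℝ V] [FiniteDimensional ℝ V]
  {B : LinearMap.BilinForm ℝ V}

attribute [local instance] isModuleTopologyOfFiniteDimensional in
theorem continuous_apply_self (B : LinearMap.BilinForm ℝ V) : Continuous fun x => B x x :=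
  (IsModuleTopology.continuous_bilinear_of_finite_left B).comp
    (continuous_id.prodMk continuous_id)

theorem exists_mem_quadric_forall_notMem (hB : B.IsSymm) {W : Submodule ℝ V} {n z : V}
    (hnW : n ∈ W) (hn : 0 < B n n) (hzW : z ∈ W) (hz : B z z < 0) (p o : V) (c : ℝ)
    {𝒜 : Set (AffineSubspace ℝ V)} (h𝒜 : 𝒜.Countable)
    (hdim : ∀ A ∈ 𝒜, finrank ℝ A.direction + 2 ≤ finrank ℝ W) :
    ∃ x, x - p ∈ W ∧ B (x - o) (x - o) = c ∧ ∀ A ∈ 𝒜, x ∉ A := by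
  set H := W ⊓ LinearMap.ker (B n)
  obtain ⟨y₀, hy₀H, hy₀⟩ := exists_mem_inf_ker_apply_self_neg hB hnW hn hzW hz
  -- Moving `p - o` along `n` makes it `B`-orthogonal to `n`, so that on `a + H + ℝ n` the
  -- quadric equation reads `B (a + y) (a + y) + s ^ 2 * B n n = c`.
  set a := (p - o) - (B n (p - o) / B n n) • n
  have ha : B n a = 0 := by simp [a, div_mul_cancel₀ _ hn.ne']
  set Q : H → ℝ := fun y => B (a + y) (a + y)
  have hQ : Continuous Q :=
    (continuous_apply_self B).comp (continuous_const.add continuous_subtype_val)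
  set σ : H → ℝ := fun y => √((c - Q y) / B n n)
  have hσ : Continuous σ := ((continuous_const.sub hQ).div_const _).sqrt
  have hdense := dense_setOf_forall_notMem_affineSubspace H.subtype (o + a) n hσ h𝒜
    fun A hA => by
      have hW : finrank ℝ W ≤ finrank ℝ ↥(H ⊔ ℝ ∙ n) :=
        Submodule.finrank_mono (le_inf_ker_sup_span hnW hn.ne')
      rw [Submodule.range_subtype]
      linarith [hdim A hA]
  obtain ⟨t, ht⟩ := exists_apply_add_smul_self_lt hB hy₀ a c
  obtain ⟨y, hyc, hy𝒜⟩ := hdense.inter_open_nonempty {y | Q y < c}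
    (isOpen_lt hQ continuous_const) ⟨⟨t • y₀, H.smul_mem t hy₀H⟩, ht⟩
  refine ⟨o + a + y + σ y • n, ?_, ?_, hy𝒜⟩
  · rw [show o + a + y + σ y • n - p = y + (σ y - B n (p - o) / B n n) • n by
      simp only [a, sub_smul]
      abel]
    exact W.add_mem y.2.1 (W.smul_mem _ hnW)
  · have hyn : B (a + y) n = 0 := by
      rw [hB.eq, map_add, ha, show B n y = 0 from y.2.2, zero_add]
    rw [show o + a + y + σ y • n - o = (a + y) + σ y • n by abel, apply_add_smul_self hB, hyn,
      Real.sq_sqrt (div_nonneg (sub_nonneg.mpr (le_of_lt hyc)) hn.le)]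
    field_simp
    ring

end Quadric

section GeneralPosition

variable {W : Type*} [AddCommGroup W] [Module ℝ W]

theorem Set.Countable.setOf_finset_subset {α : Type*} {S : Set α} (hS : S.Countable) :
    {t : Finset α | ↑t ⊆ S}.Countable :=
  ((Set.countable_ofPred_finite_subset hS).preimage Finset.coe_injective).mono
    fun t ht => by exact ⟨t.finite_toSet, ht⟩

theorem finrank_direction_affineSpan_finset_le (t : Finset W) :
    finrank ℝ (affineSpan ℝ (t : Set W)).direction ≤ t.card - 1 := by
  classical
  rw [direction_affineSpan]
  rcases t.eq_empty_or_nonempty with rfl | ht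
  · rw [Finset.coe_empty, vectorSpan_empty, finrank_bot]
    exact Nat.zero_le _
  have := finrank_vectorSpan_range_le ℝ ((↑) : t → W) (n := t.card - 1)
    (by simp; have := ht.card_pos; omega)
  rwa [Subtype.range_coe_subtype, Finset.setOfPred_mem] at this

theorem InGenPos.affineIndependent {d : ℕ} {S : Set W} (hS : InGenPos d S) {ι : Type*}
    [Fintype ι] {u : ι → W} (hu : Function.Injective u) (huS : ∀ i, u i ∈ S)
    (hcard : Fintype.card ι ≤ d + 1) : AffineIndependent ℝ u := by
  classical
  have hrange : Set.range u = ↑(Finset.univ.image u) := by simp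
  refine AffineIndependent.of_set_of_injective ?_ hu
  rw [hrange]
  refine hS _ (by simpa [← hrange, Set.range_subset_iff] using huS) ?_
  rwa [Finset.card_image_of_injective _ hu, Finset.card_univ]

theorem InGenPos.insert {d : ℕ} {S : Set W} (hS : InGenPos d S) {x : W}
    (hx : ∀ t : Finset W, ↑t ⊆ S → t.card ≤ d → x ∉ affineSpan ℝ (t : Set W)) :
    InGenPos d (insert x S) := by
  classical
  intro t ht hcard
  by_cases hxt : x ∈ t
  swap
  · exact hS t (fun y hy => (ht hy).resolve_left (ne_of_mem_of_not_mem hy hxt)) hcard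
  have hrest : ↑(t.erase x) ⊆ S := fun y hy => by
    rw [Finset.coe_erase] at hy
    exact (ht hy.1).resolve_left hy.2
  have hcard' : (t.erase x).card ≤ d := by rw [Finset.card_erase_of_mem hxt]; omega
  refine AffineIndependent.affineIndependent_of_notMem_span (i := ⟨x, hxt⟩) ?_ ?_
  · refine AffineIndependent.of_set_of_injective ?_ fun a b h => Subtype.ext (Subtype.ext h)
    rw [show Set.range (fun y : {y : t // y ≠ ⟨x, hxt⟩} => (y : W)) = ↑(t.erase x) by
      ext y
      simp [and_comm, Subtype.ext_iff]]
    exact hS _ hrest (by omega)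
  · rw [show (fun y : t => (y : W)) '' {y | y ≠ ⟨x, hxt⟩} = ↑(t.erase x) by
      ext y
      simp [and_comm, Subtype.ext_iff]]
    exact hx _ hrest hcard'

end GeneralPosition

section Minkowski

variable {d : ℕ}

noncomputable def mformBilin (d : ℕ) : LinearMap.BilinForm ℝ (Mink d) :=
  (innerₗ _).compl₁₂ (LinearMap.fst ℝ _ _) (LinearMap.fst ℝ _ _) -
    (innerₗ _).compl₁₂ (LinearMap.snd ℝ _ _) (LinearMap.snd ℝ _ _)

theorem mformBilin_apply (u v : Mink d) : mformBilin d u v = mform d u v := rfl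

theorem mform_self (z : Mink d) : mform d z z = ‖z.1‖ ^ 2 - ‖z.2‖ ^ 2 := by
  simp [mform]

theorem mformBilin_isSymm : (mformBilin d).IsSymm :=
  ⟨fun u v => by simp only [mformBilin_apply, mform, real_inner_comm]⟩

theorem mformBilin_separatingLeft : LinearMap.SeparatingLeft (mformBilin d) := by
  intro z hz
  have h := hz (z.1, -z.2)
  simp only [mformBilin_apply, mform, inner_neg_right, sub_neg_eq_add,
    real_inner_self_eq_norm_sq] at h
  have h1 : ‖z.1‖ = 0 := by nlinarith [sq_nonneg ‖z.1‖, sq_nonneg ‖z.2‖, norm_nonneg z.1]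
  have h2 : ‖z.2‖ = 0 := by nlinarith [sq_nonneg ‖z.1‖, sq_nonneg ‖z.2‖, norm_nonneg z.2]
  exact Prod.ext (norm_eq_zero.mp h1) (norm_eq_zero.mp h2)

theorem finrank_mink : finrank ℝ (Mink d) = 2 * d := by
  simp [two_mul]

theorem finrank_le_of_forall_mem_map_eq_zero {W : Submodule ℝ (Mink d)}
    {f : Mink d →ₗ[ℝ] EuclideanSpace ℝ (Fin d)} (hf : ∀ z ∈ W, f z = 0 → z = 0) :
    finrank ℝ W ≤ d := by
  have hinj : Function.Injective (f.comp W.subtype) :=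
    (injective_iff_map_eq_zero _).mpr fun z hz => Subtype.ext (hf z z.2 hz)
  simpa using LinearMap.finrank_le_finrank_of_injective hinj

theorem exists_mem_mform_pos {W : Submodule ℝ (Mink d)} (hW : d + 1 ≤ finrank ℝ W) :
    ∃ z ∈ W, 0 < mform d z z := by
  by_contra! h
  have := finrank_le_of_forall_mem_map_eq_zero (f := LinearMap.snd ℝ _ _)
    fun z hz (h2 : z.2 = 0) => by
      have h1 := h z hz
      rw [mform_self, h2, norm_zero] at h1
      exact Prod.ext (norm_eq_zero.mp (by nlinarith [norm_nonneg z.1])) h2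
  omega

theorem exists_mem_mform_neg {W : Submodule ℝ (Mink d)} (hW : d + 1 ≤ finrank ℝ W) :
    ∃ z ∈ W, mform d z z < 0 := by
  by_contra! h
  have := finrank_le_of_forall_mem_map_eq_zero (f := LinearMap.fst ℝ _ _)
    fun z hz (h1 : z.1 = 0) => by
      have h2 := h z hz
      rw [mform_self, h1, norm_zero] at h2
      exact Prod.ext h1 (norm_eq_zero.mp (by nlinarith [norm_nonneg z.2]))
  omega

end Minkowski

/-- single-vertex extension step.  Given a countable set `S ⊆ ℝ^d_d`
in `d`-general position, at most `d` distinct points `u₁, …, u_m` of `S` and arbitrary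
real numbers `c₁, …, c_m`, there is a point `u₀` with prescribed squared distances
`⟨u₀ - uᵢ, u₀ - uᵢ⟩ = cᵢ` such that `S ∪ {u₀}` is still in `d`-general position. -/
theorem single_vertex_extension (d : ℕ) (hd : 1 ≤ d) (S : Set (Mink d))
    (hS : S.Countable) (hgen : InGenPos d S)
    (m : ℕ) (hm : m ≤ d) (u : Fin m → Mink d) (hu : Function.Injective u)
    (huS : ∀ i : Fin m, u i ∈ S) (c : Fin m → ℝ) :
    ∃ u₀ : Mink d,
      (∀ i : Fin m, mform d (u₀ - u i) (u₀ - u i) = c i) ∧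
      InGenPos d (insert u₀ S) := by
  obtain ⟨p, o, c₀, W, hW, hsol⟩ : ∃ (p o : Mink d) (c₀ : ℝ) (W : Submodule ℝ (Mink d)),
      d + 1 ≤ finrank ℝ W ∧ ∀ x, x - p ∈ W → mform d (x - o) (x - o) = c₀ →
        ∀ i, mform d (x - u i) (x - u i) = c i := by
    rcases m with _ | k
    · exact ⟨0, 0, 0, ⊤, by rw [finrank_top, finrank_mink]; omega, fun _ _ _ i => i.elim0⟩
    obtain ⟨p, W, hW, hsol⟩ := exists_submodule_forall_apply_sub_self_eq mformBilin_isSymm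
      mformBilin_separatingLeft (hgen.affineIndependent hu huS (by simp; omega)) c
    exact ⟨p, u 0, c 0, W, by rw [finrank_mink] at hW; omega, hsol⟩
  obtain ⟨n, hnW, hn⟩ := exists_mem_mform_pos hW
  obtain ⟨z, hzW, hz⟩ := exists_mem_mform_neg hW
  set 𝒜 := (fun t : Finset (Mink d) => affineSpan ℝ (t : Set (Mink d))) ''
    {t | ↑t ⊆ S ∧ t.card ≤ d}
  have h𝒜 : 𝒜.Countable := (hS.setOf_finset_subset.mono fun t ht => ht.1).image _
  have hdim : ∀ A ∈ 𝒜, finrank ℝ A.direction + 2 ≤ finrank ℝ W := by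
    rintro _ ⟨t, ⟨-, ht⟩, rfl⟩
    exact (Nat.add_le_add_right (finrank_direction_affineSpan_finset_le t) 2).trans (by omega)
  obtain ⟨x, hxp, hxo, hx𝒜⟩ :=
    exists_mem_quadric_forall_notMem mformBilin_isSymm hnW hn hzW hz p o c₀ h𝒜 hdim
  exact ⟨x, hsol x hxp hxo, hgen.insert fun t ht hcard => hx𝒜 _ ⟨t, ⟨ht, hcard⟩, rfl⟩⟩
end

section
/- Let d ≥ 1 and let U be a d-dimensional linear subspace of ℝ^d × ℝ^d. Then there exists a linear isometry g : ℝ^d → ℝ^d (an orthogonal transformation of Euclidean space ℝ^d) such that the linear map U → ℝ^d sending (u⁺, u⁻) ∈ U to u⁺ − g(u⁻) is bijective. -/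
open Module

noncomputable section Aux

set_option maxHeartbeats 1600000 in

open RealInnerProductSpace in
theorem aux_exists_isometry {E : Type*} [NormedAddCommGroup E] [InnerProductSpace ℝ E]
    [FiniteDimensional ℝ E] {d : ℕ} (hE : finrank ℝ E = d)
    (a b : E →ₗ[ℝ] EuclideanSpace ℝ (Fin d))
    (hinner : ∀ x y : E, ⟪x, y⟫ = ⟪a x, a y⟫ + ⟪b x, b y⟫) :
    ∃ g : EuclideanSpace ℝ (Fin d) ≃ₗᵢ[ℝ] EuclideanSpace ℝ (Fin d),
      Function.Bijective (fun x : E => a x - g (b x)) := by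
  classical
  let badj : EuclideanSpace ℝ (Fin d) →ₗ[ℝ] E := LinearMap.adjoint (𝕜 := ℝ) b
  have hbadj : ∀ (v : EuclideanSpace ℝ (Fin d)) (x : E), ⟪badj v, x⟫ = ⟪v, b x⟫ :=
    fun v x => LinearMap.adjoint_inner_left b x v
  let T := badj ∘ₗ b
  have hT : T.IsSymmetric := by
    intro x y
    show ⟪badj (b x), y⟫ = ⟪x, badj (b y)⟫
    calc ⟪badj (b x), y⟫ = ⟪b x, b y⟫ := hbadj _ _
      _ = ⟪badj (b y), x⟫ := by rw [hbadj]; exact real_inner_comm _ _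
      _ = ⟪x, badj (b y)⟫ := real_inner_comm _ _
  let e := hT.eigenvectorBasis hE
  let μ := hT.eigenvalues hE
  have he : ∀ i j, ⟪e i, e j⟫ = if i = j then 1 else 0 := by
    intro i j
    have := e.orthonormal
    rw [orthonormal_iff_ite] at this
    exact this i j
  have hb : ∀ i j, ⟪b (e i), b (e j)⟫ = μ i * (if i = j then 1 else 0) := by
    intro i j
    have h1 : T (e i) = (μ i : ℝ) • e i := hT.apply_eigenvectorBasis hE i
    calc ⟪b (e i), b (e j)⟫ = ⟪T (e i), e j⟫ := (hbadj _ _).symm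
      _ = μ i * ⟪e i, e j⟫ := by rw [h1, real_inner_smul_left]
      _ = μ i * (if i = j then 1 else 0) := by rw [he]
  have ha : ∀ i j, ⟪a (e i), a (e j)⟫ = (1 - μ i) * (if i = j then 1 else 0) := by
    intro i j
    have := hinner (e i) (e j)
    rw [he, hb] at this
    linarith [this]
  have hμ0 : ∀ i, 0 ≤ μ i := by
    intro i
    have := hb i i
    rw [if_pos rfl, mul_one] at this
    have h2 := real_inner_self_nonneg (x := b (e i))
    linarith
  have hμ1 : ∀ i, μ i ≤ 1 := by
    intro i
    have := ha i i
    rw [if_pos rfl, mul_one] at this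
    have h2 := real_inner_self_nonneg (x := a (e i))
    linarith
  set c : Fin d → ℝ := fun i => Real.sqrt (1 - μ i) with hc
  set s : Fin d → ℝ := fun i => Real.sqrt (μ i) with hs
  have hc2 : ∀ i, c i ^ 2 = 1 - μ i := fun i => Real.sq_sqrt (by linarith [hμ1 i])
  have hs2 : ∀ i, s i ^ 2 = μ i := fun i => Real.sq_sqrt (hμ0 i)
  have hcard : finrank ℝ (EuclideanSpace ℝ (Fin d)) = Fintype.card (Fin d) := by
    rw [finrank_euclideanSpace_fin, Fintype.card_fin]
  -- basis f with a (e i) = c i • f i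
  obtain ⟨f, hf⟩ : ∃ f : OrthonormalBasis (Fin d) ℝ (EuclideanSpace ℝ (Fin d)), ∀ i ∈ {i | c i ≠ 0},
      f i = (c i)⁻¹ • a (e i) := by
    apply Orthonormal.exists_orthonormalBasis_extension_of_card_eq hcard
    rw [orthonormal_iff_ite]
    rintro ⟨i, hi⟩ ⟨j, hj⟩
    simp only [Set.restrict_apply]
    rw [real_inner_smul_left, real_inner_smul_right, ha]
    rcases eq_or_ne i j with rfl | hij
    · rw [if_pos rfl, mul_one, if_pos rfl]
      rw [← hc2 i, pow_two, inv_mul_cancel_left₀ (hi : c i ≠ 0), inv_mul_cancel₀ (hi : c i ≠ 0)]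
    · simp [hij, Subtype.mk.injEq]
  obtain ⟨h, hh⟩ : ∃ h : OrthonormalBasis (Fin d) ℝ (EuclideanSpace ℝ (Fin d)), ∀ i ∈ {i | s i ≠ 0},
      h i = (s i)⁻¹ • b (e i) := by
    apply Orthonormal.exists_orthonormalBasis_extension_of_card_eq hcard
    rw [orthonormal_iff_ite]
    rintro ⟨i, hi⟩ ⟨j, hj⟩
    simp only [Set.restrict_apply]
    rw [real_inner_smul_left, real_inner_smul_right, hb]
    rcases eq_or_ne i j with rfl | hij
    · rw [if_pos rfl, mul_one, if_pos rfl]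
      rw [← hs2 i, pow_two, inv_mul_cancel_left₀ (hi : s i ≠ 0), inv_mul_cancel₀ (hi : s i ≠ 0)]
    · simp [hij, Subtype.mk.injEq]
  have haf : ∀ i, a (e i) = c i • f i := by
    intro i
    by_cases hci : c i = 0
    · have : ⟪a (e i), a (e i)⟫ = 0 := by
        rw [ha]; simp only [if_pos rfl, mul_one]
        rw [← hc2 i, hci]; ring
      rw [inner_self_eq_zero] at this
      rw [this, hci, zero_smul]
    · rw [hf i hci, smul_smul, mul_inv_cancel₀ hci, one_smul]
  have hbh : ∀ i, b (e i) = s i • h i := by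
    intro i
    by_cases hsi : s i = 0
    · have : ⟪b (e i), b (e i)⟫ = 0 := by
        rw [hb]; simp only [if_pos rfl, mul_one]
        rw [← hs2 i, hsi]; ring
      rw [inner_self_eq_zero] at this
      rw [this, hsi, zero_smul]
    · rw [hh i hsi, smul_smul, mul_inv_cancel₀ hsi, one_smul]
  -- the isometry
  let g : EuclideanSpace ℝ (Fin d) ≃ₗᵢ[ℝ] EuclideanSpace ℝ (Fin d) := (h.repr.trans f.repr.symm).trans (LinearIsometryEquiv.neg ℝ)
  have hg : ∀ i, g (h i) = -(f i) := by
    intro i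
    simp [g, LinearIsometryEquiv.trans_apply, OrthonormalBasis.repr_self,
      OrthonormalBasis.repr_symm_single]
  -- the linear map on U'
  let φ : E →ₗ[ℝ] EuclideanSpace ℝ (Fin d) := a - (g.toLinearEquiv : EuclideanSpace ℝ (Fin d) →ₗ[ℝ] EuclideanSpace ℝ (Fin d)) ∘ₗ b
  have hφ : ∀ u : E, φ u = a u - g (b u) := fun u => rfl
  have hφe : ∀ i, φ (e i) = (c i + s i) • f i := by
    intro i
    rw [hφ, haf, hbh, map_smul, hg, add_smul, smul_neg, sub_neg_eq_add]
  have hcs : ∀ i, c i + s i ≠ 0 := by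
    intro i hzero
    have hc0 : c i = 0 := by nlinarith [Real.sqrt_nonneg (1 - μ i), Real.sqrt_nonneg (μ i)]
    have hs0 : s i = 0 := by nlinarith [Real.sqrt_nonneg (1 - μ i), Real.sqrt_nonneg (μ i)]
    have := hc2 i
    have := hs2 i
    rw [hc0] at *
    nlinarith [hc2 i, hs2 i]
  have hinj : Function.Injective φ := by
    rw [← LinearMap.ker_eq_bot]
    rw [Submodule.eq_bot_iff]
    intro x hx
    rw [LinearMap.mem_ker] at hx
    have hexp : x = ∑ i, e.repr x i • e i := (e.sum_repr x).symm
    have : φ x = ∑ i, ((c i + s i) * e.repr x i) • f i := by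
      conv_lhs => rw [hexp]
      rw [map_sum]
      congr 1
      ext i
      rw [map_smul, hφe, smul_smul, mul_comm]
    rw [hx] at this
    have hcoef : ∀ i, (c i + s i) * e.repr x i = 0 := by
      have hli := f.orthonormal.linearIndependent
      rw [Fintype.linearIndependent_iff] at hli
      exact hli _ this.symm
    have hrep : ∀ i, e.repr x i = 0 := fun i =>
      (mul_eq_zero.mp (hcoef i)).resolve_left (hcs i)
    rw [hexp]
    simp [hrep]
  have hbij : Function.Bijective φ := by
    refine ⟨hinj, ?_⟩
    rw [← LinearMap.injective_iff_surjective_of_finrank_eq_finrank (by rw [hE, hcard, Fintype.card_fin])]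
    exact hinj
  refine ⟨g, ?_⟩
  have : (fun x : E => a x - g (b x)) = φ := by
    funext x
    rw [hφ]
  rw [this]
  exact hbij

set_option maxHeartbeats 1600000 in
open RealInnerProductSpace in
theorem exists_isometry_projection_bijective' (d : ℕ)
    (U : Submodule ℝ (EuclideanSpace ℝ (Fin d) × EuclideanSpace ℝ (Fin d)))
    (hU : finrank ℝ U = d) :
    ∃ g : EuclideanSpace ℝ (Fin d) ≃ₗᵢ[ℝ] EuclideanSpace ℝ (Fin d),
      Function.Bijective
        (fun u : U => (u : EuclideanSpace ℝ (Fin d) × EuclideanSpace ℝ (Fin d)).1 -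
          g (u : EuclideanSpace ℝ (Fin d) × EuclideanSpace ℝ (Fin d)).2) := by
  classical
  let E : WithLp 2 (EuclideanSpace ℝ (Fin d) × EuclideanSpace ℝ (Fin d)) ≃ₗ[ℝ] EuclideanSpace ℝ (Fin d) × EuclideanSpace ℝ (Fin d) := WithLp.linearEquiv 2 ℝ (EuclideanSpace ℝ (Fin d) × EuclideanSpace ℝ (Fin d))
  haveI : FiniteDimensional ℝ (WithLp 2 (EuclideanSpace ℝ (Fin d) × EuclideanSpace ℝ (Fin d))) := E.symm.finiteDimensional
  let U' : Submodule ℝ (WithLp 2 (EuclideanSpace ℝ (Fin d) × EuclideanSpace ℝ (Fin d))) := U.comap (E : WithLp 2 (EuclideanSpace ℝ (Fin d) × EuclideanSpace ℝ (Fin d)) →ₗ[ℝ] EuclideanSpace ℝ (Fin d) × EuclideanSpace ℝ (Fin d))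
  let eqU : U' ≃ₗ[ℝ] U := E.ofSubmodule' U
  have hU' : finrank ℝ U' = d := by rw [eqU.finrank_eq, hU]
  obtain ⟨a, b, hinner, hab⟩ :
      ∃ (a b : U' →ₗ[ℝ] EuclideanSpace ℝ (Fin d)),
        (∀ x y : U', ⟪x, y⟫ = ⟪a x, a y⟫ + ⟪b x, b y⟫) ∧
        (∀ u : U, a (eqU.symm u) =
            (u : EuclideanSpace ℝ (Fin d) × EuclideanSpace ℝ (Fin d)).1 ∧
          b (eqU.symm u) =
            (u : EuclideanSpace ℝ (Fin d) × EuclideanSpace ℝ (Fin d)).2) := by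
    refine ⟨(LinearMap.fst ℝ (EuclideanSpace ℝ (Fin d)) (EuclideanSpace ℝ (Fin d))) ∘ₗ
        (E : WithLp 2 (EuclideanSpace ℝ (Fin d) × EuclideanSpace ℝ (Fin d)) →ₗ[ℝ] EuclideanSpace ℝ (Fin d) × EuclideanSpace ℝ (Fin d)) ∘ₗ U'.subtype,
      (LinearMap.snd ℝ (EuclideanSpace ℝ (Fin d)) (EuclideanSpace ℝ (Fin d))) ∘ₗ
        (E : WithLp 2 (EuclideanSpace ℝ (Fin d) × EuclideanSpace ℝ (Fin d)) →ₗ[ℝ] EuclideanSpace ℝ (Fin d) × EuclideanSpace ℝ (Fin d)) ∘ₗ U'.subtype, ?_, ?_⟩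
    · intro x y
      rw [Submodule.coe_inner, WithLp.prod_inner_apply]
      rfl
    · intro u
      constructor <;> rfl
  obtain ⟨g, hg⟩ := aux_exists_isometry (E := U') hU' a b hinner
  refine ⟨g, ?_⟩
  have heq : (fun u : U => (u : EuclideanSpace ℝ (Fin d) × EuclideanSpace ℝ (Fin d)).1 -
      g (u : EuclideanSpace ℝ (Fin d) × EuclideanSpace ℝ (Fin d)).2)
      = (fun x : U' => a x - g (b x)) ∘ (eqU.symm : U → U') := by
    funext u
    simp only [Function.comp_apply, (hab u).1, (hab u).2]
  rw [heq]
  exact hg.comp eqU.symm.bijective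

end Aux

theorem exists_isometry_projection_bijective (d : ℕ) (hd : 1 ≤ d)
    (U : Submodule ℝ (EuclideanSpace ℝ (Fin d) × EuclideanSpace ℝ (Fin d)))
    (hU : finrank ℝ U = d) :
    ∃ g : EuclideanSpace ℝ (Fin d) ≃ₗᵢ[ℝ] EuclideanSpace ℝ (Fin d),
      Function.Bijective
        (fun u : U => (u : EuclideanSpace ℝ (Fin d) × EuclideanSpace ℝ (Fin d)).1 -
          g (u : EuclideanSpace ℝ (Fin d) × EuclideanSpace ℝ (Fin d)).2) := by
  exact exists_isometry_projection_bijective' d U hU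
end
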